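/- Let u, v : ℝ × ℝ → ℝ be smooth (C^∞) functions of (t, x) and let a, b, c, ε, κ, λ, σ be real constants with b = 0, ε = 0, κ = 0, σ = 0. If (u, v) solves the BBM-KdV system, then the vector with components C^t = 2·(t·(a·u + c)·v − x·u) and C^x = t·(c·(a·u + 2c)·u − a·λ·u_x²) + 2·(a·u + c)·((a·t·v − x)·v + λ·t·u_xx) satisfies the conservation law ∂_t C^t + ∂_x C^x = 0 at every point (t, x). -/

import Mathlib

open Real

noncomputable def pt (f : ℝ × ℝ → ℝ) : ℝ × ℝ → ℝ :=
  fun p => deriv (fun s => f (s, p.2)) p.1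

noncomputable def px (f : ℝ × ℝ → ℝ) : ℝ × ℝ → ℝ :=
  fun p => deriv (fun s => f (p.1, s)) p.2

/-- The BBM-KdV system: F1 = 0 and F2 = 0 everywhere. -/
def BBMKdV (a b c ε κ lam σ : ℝ) (u v : ℝ × ℝ → ℝ) : Prop :=
  (∀ p : ℝ × ℝ, pt u p + (a + b) * v p * px u p + (a * u p + c) * px v p
      + ε * px (px (pt u)) p + κ * px (px (px v)) p = 0) ∧
  (∀ p : ℝ × ℝ, pt v p + (b * u p + c) * px u p + (a + b) * v p * px v p
      + lam * px (px (px u)) p + σ * px (px (pt v)) p = 0)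

lemma hasDerivAt_slice_t (f : ℝ × ℝ → ℝ) (hf : ContDiff ℝ (⊤ : ℕ∞) f) (p : ℝ × ℝ) :
    HasDerivAt (fun s => f (s, p.2)) (pt f p) p.1 := by
  have hline : HasDerivAt (fun s : ℝ => (s, p.2)) ((1 : ℝ), (0 : ℝ)) p.1 :=
    (hasDerivAt_id p.1).prodMk (hasDerivAt_const p.1 p.2)
  have hF : HasFDerivAt f (fderiv ℝ f p) p := (hf.differentiable (by simp) p).hasFDerivAt
  have h := hF.comp_hasDerivAt p.1 hline
  have he : pt f p = fderiv ℝ f p (1, 0) := h.deriv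
  rw [he]; exact h

lemma hasDerivAt_slice_x (f : ℝ × ℝ → ℝ) (hf : ContDiff ℝ (⊤ : ℕ∞) f) (p : ℝ × ℝ) :
    HasDerivAt (fun s => f (p.1, s)) (px f p) p.2 := by
  have hline : HasDerivAt (fun s : ℝ => (p.1, s)) ((0 : ℝ), (1 : ℝ)) p.2 :=
    (hasDerivAt_const p.2 p.1).prodMk (hasDerivAt_id p.2)
  have hF : HasFDerivAt f (fderiv ℝ f p) p := (hf.differentiable (by simp) p).hasFDerivAt
  have h := hF.comp_hasDerivAt p.2 hline
  have he : px f p = fderiv ℝ f p (0, 1) := h.deriv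
  rw [he]; exact h

lemma px_eq_fderiv (f : ℝ × ℝ → ℝ) (hf : ContDiff ℝ (⊤ : ℕ∞) f) (p : ℝ × ℝ) :
    px f p = fderiv ℝ f p (0, 1) := by
  have hline : HasDerivAt (fun s : ℝ => (p.1, s)) ((0 : ℝ), (1 : ℝ)) p.2 :=
    (hasDerivAt_const p.2 p.1).prodMk (hasDerivAt_id p.2)
  have hF : HasFDerivAt f (fderiv ℝ f p) p := (hf.differentiable (by simp) p).hasFDerivAt
  exact (hF.comp_hasDerivAt p.2 hline).deriv

lemma contDiff_px (f : ℝ × ℝ → ℝ) (hf : ContDiff ℝ (⊤ : ℕ∞) f) : ContDiff ℝ (⊤ : ℕ∞) (px f) := by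
  have h : px f = fun p => fderiv ℝ f p (0, 1) := funext (px_eq_fderiv f hf)
  rw [h]
  exact (ContinuousLinearMap.apply ℝ ℝ ((0 : ℝ), (1 : ℝ))).contDiff.comp
    (hf.fderiv_right (by simp))

theorem stmt_4 (u v : ℝ × ℝ → ℝ) (hu : ContDiff ℝ (⊤ : ℕ∞) u) (hv : ContDiff ℝ (⊤ : ℕ∞) v)
    (a b c ε κ lam σ : ℝ)
    (hb : b = 0) (he : ε = 0) (hk : κ = 0) (hs : σ = 0)
    (hsol : BBMKdV a b c ε κ lam σ u v) :
    ∀ p : ℝ × ℝ,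
      pt (fun q => 2 * (q.1 * (a * u q + c) * v q - q.2 * u q)) p
      + px (fun q => q.1 * (c * (a * u q + 2 * c) * u q - a * lam * (px u q) ^ 2) + 2 * (a * u q + c) * ((a * q.1 * v q - q.2) * v q + lam * q.1 * px (px u) q)) p = 0 := by
  subst hb he hk hs
  intro p
  have E1 := hsol.1 p
  have E2 := hsol.2 p
  have hpxu : ContDiff ℝ (⊤ : ℕ∞) (px u) := contDiff_px u hu
  have hpxxu : ContDiff ℝ (⊤ : ℕ∞) (px (px u)) := contDiff_px _ hpxu
  have hut := hasDerivAt_slice_t u hu p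
  have hvt := hasDerivAt_slice_t v hv p
  have hux := hasDerivAt_slice_x u hu p
  have hvx := hasDerivAt_slice_x v hv p
  have huxx := hasDerivAt_slice_x (px u) hpxu p
  have huxxx := hasDerivAt_slice_x (px (px u)) hpxxu p
  have H1 := ((((hasDerivAt_id p.1).mul ((hut.const_mul a).add_const c)).mul hvt).sub
      (hut.const_mul p.2)).const_mul 2
  have H2 := (((((hux.const_mul a).add_const (2 * c)).const_mul c).mul hux).sub
      ((huxx.pow 2).const_mul (a * lam))).const_mul p.1 |>.add
    ((((hux.const_mul a).add_const c).const_mul 2).mul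
      ((((hvx.const_mul (a * p.1)).sub (hasDerivAt_id p.2)).mul hvx).add
        (huxxx.const_mul (lam * p.1))))
  rw [show pt (fun q => 2 * (q.1 * (a * u q + c) * v q - q.2 * u q)) p = _ from H1.deriv,
    show px (fun q => q.1 * (c * (a * u q + 2 * c) * u q - a * lam * (px u q) ^ 2)
      + 2 * (a * u q + c) * ((a * q.1 * v q - q.2) * v q + lam * q.1 * px (px u) q)) p = _
      from H2.deriv]
  simp only [Prod.mk.eta, id_eq, Pi.mul_apply, Pi.sub_apply, Pi.add_apply, Pi.pow_apply]
  linear_combination (2 * (p.1 * a * v p - p.2)) * E1 + (2 * p.1 * (a * u p + c)) * E2
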